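/- Under the bidirectional replacement 123 ↔ 13★: (a) every reverse identity permutation rid_n is isolated; (b) two permutations π and σ, each having at least one element that is not a left-to-right minimum, are equivalent if and only if they agree in all three of the following statistics: the number m of left-to-right minima, the position (from the left) of the leftmost non-left-to-right-minimum element, and the number v of left-to-right minima whose value is less than the value of the largest non-left-to-right-minimum element. Hence the equivalence classes are exactly the singletons {rid_n} together with one class for each attainable triple of statistics. -/

import Mathlib

/-!
Pattern-replacement equivalences between permutations of different lengths
(arXiv:1309.4802). A ★-pattern is encoded as a `List (Option ℕ)`, where `none`
is the placeholder ★ and `some k` an integer entry.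
-/

/-- A ★-pattern / star-string entry: `none` is ★, `some k` an integer `k`. -/
abbrev SPat := List (Option ℕ)

/-- The integer entries of a star-string, in order. -/
def ints (ρ : SPat) : List ℕ := ρ.filterMap id

/-- Two lists of naturals are order-isomorphic. -/
def OrdIso (u v : List ℕ) : Prop :=
  u.length = v.length ∧
  ∀ i j, i < u.length → j < u.length → (u.getD i 0 < u.getD j 0 ↔ v.getD i 0 < v.getD j 0)

/-- A valid string of distinct positive integers and ★'s. -/
def StarStr (ρ : SPat) : Prop := (ints ρ).Nodup ∧ ∀ k ∈ ints ρ, 0 < k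

/-- `r` (entry by entry) forms a copy of the ★-pattern `δ`: ★'s in the same
positions, and the integer entries order-isomorphic. -/
def IsCopy (r δ : SPat) : Prop :=
  r.length = δ.length ∧
  (∀ i, (r.getD i none = none ↔ δ.getD i none = none)) ∧
  OrdIso (ints r) (ints δ)

/-- `Repl a b ρ₁ ρ₂` : `ρ₂` is obtained from `ρ₁` by replacing an occurrence of `a`
as a (not necessarily contiguous) substring of `ρ₁` by `b`, entry by entry at the
same positions. -/
inductive Repl : SPat → SPat → SPat → SPat → Prop
  | nil : Repl [] [] [] []
  | keep {a b ρ₁ ρ₂} (x : Option ℕ) : Repl a b ρ₁ ρ₂ → Repl a b (x :: ρ₁) (x :: ρ₂)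
  | repl {a b ρ₁ ρ₂} (x y : Option ℕ) :
      Repl a b ρ₁ ρ₂ → Repl (x :: a) (y :: b) (x :: ρ₁) (y :: ρ₂)

/-- `π` is a permutation of `1, …, n` (as a list). -/
def IsPermList (π : List ℕ) : Prop := π.Perm (List.range' 1 π.length)

/-- `σ` is a result of the replacement `α → β` applied to the permutation `π`:
(1) `ρ₁` is `π` renumbered (order-isomorphically) with ★'s inserted anywhere;
(2) a substring `a` of `ρ₁` forming a copy of `α` is replaced (in place) by a
string `b` that is a copy of `β`, whose integers meet `ρ₁` only inside `a`, and
which agrees with `a` on the integer entries common to `α` and `β`;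
(3) dropping ★'s and renumbering gives the permutation `σ`. -/
def IsResult (α β : SPat) (π σ : List ℕ) : Prop :=
  ∃ ρ₁ ρ₂ a b : SPat,
    StarStr ρ₁ ∧ OrdIso π (ints ρ₁) ∧
    IsCopy a α ∧
    StarStr b ∧ IsCopy b β ∧
    (∀ k ∈ ints b, k ∈ ints ρ₁ → k ∈ ints a) ∧
    (∀ i j x, α.getD i none = some x → β.getD j none = some x →
      a.getD i none = b.getD j none) ∧
    Repl a b ρ₁ ρ₂ ∧
    IsPermList σ ∧ OrdIso (ints ρ₂) σ

/-- Equivalence under the bidirectional replacement `α ↔ β`: a finite sequence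
of `α → β` and `β → α` replacements. -/
def PermEquiv (α β : SPat) (π σ : List ℕ) : Prop :=
  Relation.ReflTransGen (fun τ υ => IsResult α β τ υ ∨ IsResult β α τ υ) π σ

/-- `π` is isolated under `α ↔ β`: no other permutation is equivalent to it. -/
def Isolated (α β : SPat) (π : List ℕ) : Prop :=
  ∀ σ : List ℕ, IsPermList σ → PermEquiv α β π σ → σ = π

/-- The identity permutation `1 2 ⋯ n`. -/
def idPerm (n : ℕ) : List ℕ := List.range' 1 n

/-- The reverse identity permutation `n (n-1) ⋯ 1`. -/
def ridPerm (n : ℕ) : List ℕ := (List.range' 1 n).reverse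

def pat123 : SPat := [some 1, some 2, some 3]
def pat132 : SPat := [some 1, some 3, some 2]
def patS32 : SPat := [none, some 3, some 2]
def pat3S2 : SPat := [some 3, none, some 2]
def pat32S : SPat := [some 3, some 2, none]
def patS31 : SPat := [none, some 3, some 1]
def pat3S1 : SPat := [some 3, none, some 1]
def pat31S : SPat := [some 3, some 1, none]
def patS21 : SPat := [none, some 2, some 1]
def pat2S1 : SPat := [some 2, none, some 1]
def pat21S : SPat := [some 2, some 1, none]
def pat12S : SPat := [some 1, some 2, none]
def pat1S3 : SPat := [some 1, none, some 3]
def patS23 : SPat := [none, some 2, some 3]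
def patS12 : SPat := [none, some 1, some 2]
def pat23S : SPat := [some 2, some 3, none]
def pat13S : SPat := [some 1, some 3, none]
def pat1S2 : SPat := [some 1, none, some 2]

/-- The entry at (0-indexed) position `i` of `π` is a left-to-right minimum. -/
def IsLRMin (π : List ℕ) (i : ℕ) : Prop := ∀ j < i, π.getD i 0 < π.getD j 0

instance (π : List ℕ) (i : ℕ) : Decidable (IsLRMin π i) := by
  unfold IsLRMin; infer_instance

/-- The number of left-to-right minima of `π`. -/
def numLRMin (π : List ℕ) : ℕ :=
  ((List.range π.length).filter fun i => decide (IsLRMin π i)).length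

/-- `π` has at least one element that is not a left-to-right minimum. -/
def HasNonMin (π : List ℕ) : Prop := ∃ i < π.length, ¬ IsLRMin π i

/-- The 0-indexed position of the leftmost non-left-to-right-minimum, if any. -/
def leftNonMin (π : List ℕ) : Option ℕ :=
  (List.range π.length).find? fun i => ! decide (IsLRMin π i)

/-- The 0-indexed position of the rightmost non-left-to-right-minimum, if any. -/
def rightNonMin (π : List ℕ) : Option ℕ :=
  (List.range π.length).reverse.find? fun i => ! decide (IsLRMin π i)

/-- The values of the non-left-to-right-minimum entries of `π`. -/
def nonMinVals (π : List ℕ) : List ℕ :=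
  ((List.range π.length).filter fun i => ! decide (IsLRMin π i)).map fun i => π.getD i 0

/-- The largest non-left-to-right-minimum value of `π`. -/
def maxNonMin (π : List ℕ) : ℕ := (nonMinVals π).foldr max 0

/-- The smallest non-left-to-right-minimum value of `π`. -/
def minNonMin (π : List ℕ) : ℕ := (nonMinVals π).foldr min π.length

/-- The number of left-to-right minima of `π` whose value is less than the
value of the largest non-left-to-right-minimum element. -/
def vStatMax (π : List ℕ) : ℕ :=
  ((List.range π.length).filter fun i =>
    decide (IsLRMin π i) && decide (π.getD i 0 < maxNonMin π)).length

/-- The number of left-to-right minima of `π` whose value is less than the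
value of the smallest non-left-to-right-minimum element. -/
def vStatMin (π : List ℕ) : ℕ :=
  ((List.range π.length).filter fun i =>
    decide (IsLRMin π i) && decide (π.getD i 0 < minNonMin π)).length

/-!
On the integer entries, a replacement `123 → 13★` deletes the middle entry `y` of an occurrence
`x < y < z` and moves `z` into its place (`Slide`). Since `y` and `z` exceed the earlier `x`,
neither is a left-to-right minimum nor lowers the running minimum, so the left-to-right minima,
the leftmost non-minimum position and (as `y < z`) the largest non-minimum value are unchanged;
the statistics are also invariant under renumbering. A reverse identity has no non-minimum, so no
replacement applies to it. Conversely, a permutation with two non-minima is equivalent to a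
shorter one, so every permutation with a non-minimum is equivalent to one with a single
non-minimum, and such a permutation is determined by its length, the position of its non-minimum
and the value there, i.e. by the three statistics.
-/

open List

section OrderIsomorphism

theorem ordIso_refl (u : List ℕ) : OrdIso u u := ⟨rfl, fun _ _ _ _ => Iff.rfl⟩

theorem OrdIso.symm {u v : List ℕ} (h : OrdIso u v) : OrdIso v u :=
  ⟨h.1.symm, fun i j hi hj => (h.2 i j (h.1 ▸ hi) (h.1 ▸ hj)).symm⟩

theorem OrdIso.isLRMin_iff {u w : List ℕ} (h : OrdIso u w) {i : ℕ} (hi : i < u.length) :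
    IsLRMin u i ↔ IsLRMin w i :=
  forall₂_congr fun j hj => h.2 i j hi (hj.trans hi)

theorem lt_foldr_max_iff {a : ℕ} {l : List ℕ} : a < l.foldr max 0 ↔ ∃ x ∈ l, a < x := by
  induction l with
  | nil => simp
  | cons b l ih => simp [ih]

theorem lt_maxNonMin_iff {u : List ℕ} {a : ℕ} :
    a < maxNonMin u ↔ ∃ j < u.length, ¬IsLRMin u j ∧ a < u.getD j 0 := by
  simp [maxNonMin, nonMinVals, lt_foldr_max_iff, and_assoc]

theorem vStatMax_eq_filter (u : List ℕ) :
    vStatMax u = ((range u.length).filter fun i => decide (IsLRMin u i ∧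
      ∃ j < u.length, ¬IsLRMin u j ∧ u.getD i 0 < u.getD j 0)).length := by
  simp only [vStatMax, lt_maxNonMin_iff, Bool.decide_and]

theorem OrdIso.numLRMin_eq {u w : List ℕ} (h : OrdIso u w) : numLRMin u = numLRMin w := by
  rw [numLRMin, numLRMin, ← h.1]
  congr 1
  exact filter_congr fun i hi => decide_eq_decide.2 (h.isLRMin_iff (mem_range.1 hi))

theorem OrdIso.leftNonMin_eq {u w : List ℕ} (h : OrdIso u w) : leftNonMin u = leftNonMin w := by
  rw [leftNonMin, leftNonMin, ← h.1]
  exact find?_congr fun i hi => by rw [decide_eq_decide.2 (h.isLRMin_iff (mem_range.1 hi))]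

theorem OrdIso.vStatMax_eq {u w : List ℕ} (h : OrdIso u w) : vStatMax u = vStatMax w := by
  rw [vStatMax_eq_filter, vStatMax_eq_filter, ← h.1]
  congr 1
  refine filter_congr fun i hi => decide_eq_decide.2 ?_
  have hi := mem_range.1 hi
  refine and_congr (h.isLRMin_iff hi) (exists_congr fun j => ?_)
  exact and_congr_right fun hj => and_congr (not_congr (h.isLRMin_iff hj)) (h.2 i j hi hj)

theorem OrdIso.hasNonMin_iff {u w : List ℕ} (h : OrdIso u w) : HasNonMin u ↔ HasNonMin w := by
  rw [HasNonMin, HasNonMin, ← h.1]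
  exact exists_congr fun i => and_congr_right fun hi => not_congr (h.isLRMin_iff hi)

theorem ordIso_map {f : ℕ → ℕ} (hf : StrictMono f) (u : List ℕ) : OrdIso u (u.map f) := by
  refine ⟨(length_map _).symm, fun a b ha hb => ?_⟩
  rw [getD_eq_getElem _ _ ha, getD_eq_getElem _ _ hb, getD_eq_getElem _ _ (by simpa using ha),
    getD_eq_getElem _ _ (by simpa using hb), getElem_map, getElem_map]
  exact hf.lt_iff_lt.symm

end OrderIsomorphism

theorem getD_mem {u : List ℕ} {i : ℕ} (hi : i < u.length) : u.getD i 0 ∈ u :=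
  getD_eq_getElem _ _ hi ▸ getElem_mem hi

theorem IsPermList.nodup {π : List ℕ} (h : IsPermList π) : π.Nodup :=
  h.nodup_iff.2 nodup_range'

theorem IsPermList.pos {π : List ℕ} (h : IsPermList π) : ∀ k ∈ π, 0 < k := fun k hk => by
  have := h.subset hk
  rw [mem_range'_1] at this
  omega

namespace StarReplacement

section Marks

theorem foldl_min_le_init (l : List ℕ) (c : ℕ) : l.foldl min c ≤ c := by
  induction l generalizing c with
  | nil => rfl
  | cons a l ih => exact (ih _).trans (min_le_left _ _)

theorem foldl_min_le_of_mem {l : List ℕ} {a : ℕ} (h : a ∈ l) (c : ℕ) : l.foldl min c ≤ a := by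
  induction l generalizing c with
  | nil => simp at h
  | cons b l ih =>
    rcases mem_cons.1 h with rfl | h
    · exact (foldl_min_le_init l (min c _)).trans (min_le_right _ _)
    · exact ih h _

def capMarks (c : ℕ) : List ℕ → List (Bool × ℕ)
  | [] => []
  | a :: t => (decide (a < c), a) :: capMarks (min c a) t

theorem capMarks_append (c : ℕ) (A B : List ℕ) :
    capMarks c (A ++ B) = capMarks c A ++ capMarks (A.foldl min c) B := by
  induction A generalizing c with
  | nil => rfl
  | cons a A ih => simp [capMarks, ih]

theorem isLRMin_cons_succ {a : ℕ} {t : List ℕ} {i : ℕ} :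
    IsLRMin (a :: t) (i + 1) ↔ t.getD i 0 < a ∧ IsLRMin t i := by
  simp only [IsLRMin, Nat.forall_lt_succ_left, getD_cons_succ, getD_cons_zero]

theorem capMarks_eq (c : ℕ) (u : List ℕ) : capMarks c u =
    (range u.length).map fun i => (decide (u.getD i 0 < c ∧ IsLRMin u i), u.getD i 0) := by
  induction u generalizing c with
  | nil => rfl
  | cons a t ih =>
    rw [capMarks, ih, length_cons, range_succ_eq_map, map_cons, map_map]
    congr 1
    · simp [IsLRMin]
    · refine map_congr_left fun i _ => ?_
      simp only [Function.comp, isLRMin_cons_succ, getD_cons_succ, lt_min_iff, and_assoc]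

def lrMarks (u : List ℕ) : List (Bool × ℕ) :=
  (range u.length).map fun i => (decide (IsLRMin u i), u.getD i 0)

theorem lrMarks_eq_capMarks {u : List ℕ} {c : ℕ} (hc : ∀ a ∈ u, a < c) :
    lrMarks u = capMarks c u := by
  rw [capMarks_eq, lrMarks]
  refine map_congr_left fun i hi => ?_
  have hi : i < u.length := mem_range.1 hi
  simp only [hc _ (getD_mem hi), true_and]

theorem find?_range_eq_findIdx? (n : ℕ) (p : ℕ → Bool) :
    (range n).find? p = (range n).findIdx? p := by
  induction n with
  | zero => rfl
  | succ n ih =>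
    simp only [range_succ, find?_append, findIdx?_append, ih, find?_cons, find?_nil,
      findIdx?_singleton, length_range]
    cases p n <;> simp

theorem numLRMin_eq_lrMarks (u : List ℕ) :
    numLRMin u = ((lrMarks u).filter (·.1)).length := by
  rw [lrMarks, filter_map, length_map]
  rfl

theorem leftNonMin_eq_lrMarks (u : List ℕ) :
    leftNonMin u = (lrMarks u).findIdx? (fun m => !m.1) := by
  rw [lrMarks, findIdx?_map, leftNonMin, find?_range_eq_findIdx?]
  rfl

theorem nonMinVals_eq_lrMarks (u : List ℕ) :
    nonMinVals u = ((lrMarks u).filter (fun m => !m.1)).map Prod.snd := by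
  rw [lrMarks, filter_map, map_map]
  rfl

theorem vStatMax_eq_lrMarks (u : List ℕ) :
    vStatMax u = ((lrMarks u).filter fun m => m.1 && decide (m.2 < maxNonMin u)).length := by
  rw [lrMarks, filter_map, length_map]
  rfl

theorem hasNonMin_iff_lrMarks (u : List ℕ) : HasNonMin u ↔ ∃ a, (false, a) ∈ lrMarks u := by
  simp [HasNonMin, lrMarks]

end Marks

/-- The triple `(m, position of the leftmost non-minimum, v)` of part (b). -/
def stats (π : List ℕ) : ℕ × Option ℕ × ℕ := (numLRMin π, leftNonMin π, vStatMax π)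

theorem _root_.OrdIso.stats_eq {u w : List ℕ} (h : OrdIso u w) : stats u = stats w := by
  rw [stats, stats, h.numLRMin_eq, h.leftNonMin_eq, h.vStatMax_eq]

section Slide

theorem perm_slide {I₁ I₂ I₃ I₄ : List ℕ} {x y z : ℕ} :
    I₁ ++ x :: (I₂ ++ y :: (I₃ ++ z :: I₄)) ~ y :: (I₁ ++ x :: (I₂ ++ z :: (I₃ ++ I₄))) := by
  rw [perm_iff_count]
  intro a
  simp [count_cons]
  omega

/-- The effect of a replacement `123 → 13★` on the integer entries: in an occurrence
`x < y < z` the `y` is deleted and `z` moves into its place. -/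
def Slide (u v : List ℕ) : Prop :=
  ∃ I₁ I₂ I₃ I₄ : List ℕ, ∃ x y z : ℕ, x < y ∧ y < z ∧
    u = I₁ ++ x :: (I₂ ++ y :: (I₃ ++ z :: I₄)) ∧ v = I₁ ++ x :: (I₂ ++ z :: (I₃ ++ I₄))

theorem Slide.subset {u v : List ℕ} (h : Slide u v) : v ⊆ u := by
  obtain ⟨I₁, I₂, I₃, I₄, x, y, z, -, -, rfl, rfl⟩ := h
  exact fun a ha => perm_slide.symm.subset (mem_cons_of_mem _ ha)

theorem Slide.perm {u v : List ℕ} (h : Slide u v) : ∃ y, u ~ y :: v := by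
  obtain ⟨I₁, I₂, I₃, I₄, x, y, z, -, -, rfl, rfl⟩ := h
  exact ⟨y, perm_slide⟩

theorem Slide.nodup {u v : List ℕ} (h : Slide u v) (hu : u.Nodup) : v.Nodup := by
  obtain ⟨y, hy⟩ := h.perm
  exact (nodup_cons.1 (hy.nodup_iff.1 hu)).2

/-- `y` and `z` are not below `x`, so they are never minima and do not lower the running
minimum: the marks of the other entries are unchanged. -/
theorem capMarks_slide {I₁ I₂ I₃ I₄ : List ℕ} {x y z : ℕ} (hxy : x < y) (hyz : y < z) (c : ℕ) :
    ∃ A B C, capMarks c (I₁ ++ x :: (I₂ ++ y :: (I₃ ++ z :: I₄))) =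
        A ++ (false, y) :: (B ++ (false, z) :: C) ∧
      capMarks c (I₁ ++ x :: (I₂ ++ z :: (I₃ ++ I₄))) = A ++ (false, z) :: (B ++ C) := by
  have hm := foldl_min_le_of_mem (mem_append_right I₁ (mem_cons_self (a := x) (l := I₂))) c
  have e : ∀ L, I₁ ++ x :: (I₂ ++ L) = (I₁ ++ x :: I₂) ++ L := fun L => by simp
  rw [e, e, capMarks_append c (I₁ ++ x :: I₂),
    capMarks_append c (I₁ ++ x :: I₂)]
  generalize (I₁ ++ x :: I₂).foldl min c = m at hm ⊢
  have hm' := foldl_min_le_init I₃ m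
  rw [capMarks, capMarks, min_eq_left (by omega : m ≤ y), min_eq_left (by omega : m ≤ z),
    capMarks_append m I₃, capMarks_append m I₃, capMarks]
  generalize I₃.foldl min m = m' at hm' ⊢
  rw [min_eq_left (by omega : m' ≤ z), decide_eq_false (by omega : ¬y < m),
    decide_eq_false (by omega : ¬z < m), decide_eq_false (by omega : ¬z < m')]
  exact ⟨_, _, _, rfl, rfl⟩

theorem Slide.lrMarks_eq {u v : List ℕ} (h : Slide u v) : ∃ A B C y z, y ≤ z ∧
    lrMarks u = A ++ (false, y) :: (B ++ (false, z) :: C) ∧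
      lrMarks v = A ++ (false, z) :: (B ++ C) := by
  have hc : ∀ a ∈ u, a < u.sum + 1 := fun a ha => Nat.lt_succ_of_le (le_sum_of_mem ha)
  have hsub := h.subset
  obtain ⟨I₁, I₂, I₃, I₄, x, y, z, hxy, hyz, rfl, rfl⟩ := h
  obtain ⟨A, B, C, hu, hv⟩ := capMarks_slide (I₄ := I₄) hxy hyz (_ + 1)
  exact ⟨A, B, C, y, z, hyz.le, (lrMarks_eq_capMarks hc).trans hu,
    (lrMarks_eq_capMarks fun a ha => hc a (hsub ha)).trans hv⟩

theorem Slide.maxNonMin_eq {u v : List ℕ} (h : Slide u v) : maxNonMin u = maxNonMin v := by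
  obtain ⟨A, B, C, y, z, hyz, hu, hv⟩ := h.lrMarks_eq
  refine eq_of_forall_lt_iff fun a => ?_
  simp only [maxNonMin, lt_foldr_max_iff, nonMinVals_eq_lrMarks, hu, hv]
  simp only [filter_append, filter_cons, Bool.not_false, if_true, map_append, map_cons,
    mem_append, mem_cons]
  constructor
  · rintro ⟨w, hw | rfl | hw | rfl | hw, ha⟩
    exacts [⟨w, .inl hw, ha⟩, ⟨z, .inr (.inl rfl), ha.trans_le hyz⟩, ⟨w, by tauto, ha⟩,
      ⟨w, by tauto, ha⟩, ⟨w, by tauto, ha⟩]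
  · rintro ⟨w, hw, ha⟩
    exact ⟨w, by tauto, ha⟩

theorem Slide.stats_eq {u v : List ℕ} (h : Slide u v) : stats u = stats v := by
  obtain ⟨A, B, C, y, z, -, hu, hv⟩ := h.lrMarks_eq
  simp [stats, numLRMin_eq_lrMarks, leftNonMin_eq_lrMarks, vStatMax_eq_lrMarks, h.maxNonMin_eq,
    hu, hv, findIdx?_append, findIdx?_cons]

theorem Slide.hasNonMin_left {u v : List ℕ} (h : Slide u v) : HasNonMin u := by
  obtain ⟨A, B, C, y, z, -, hu, -⟩ := h.lrMarks_eq
  exact (hasNonMin_iff_lrMarks u).2 ⟨y, by simp [hu]⟩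

theorem Slide.hasNonMin_right {u v : List ℕ} (h : Slide u v) : HasNonMin v := by
  obtain ⟨A, B, C, y, z, -, -, hv⟩ := h.lrMarks_eq
  exact (hasNonMin_iff_lrMarks v).2 ⟨z, by simp [hv]⟩

end Slide

section Replacement

@[simp] theorem ints_nil : ints [] = [] := rfl

@[simp] theorem ints_cons_some (x : ℕ) (ρ : SPat) : ints (some x :: ρ) = x :: ints ρ := rfl

@[simp] theorem ints_cons_none (ρ : SPat) : ints (none :: ρ) = ints ρ := rfl

@[simp] theorem ints_append (ρ ρ' : SPat) : ints (ρ ++ ρ') = ints ρ ++ ints ρ' :=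
  filterMap_append

@[simp] theorem ints_map_some (u : List ℕ) : ints (u.map some) = u := by
  induction u with
  | nil => rfl
  | cons a u ih => exact congrArg (a :: ·) ih

theorem repl_nil_iff {ρ₁ ρ₂ : SPat} : Repl [] [] ρ₁ ρ₂ ↔ ρ₁ = ρ₂ := by
  constructor
  · intro h
    induction ρ₁ generalizing ρ₂ with
    | nil => cases h; rfl
    | cons x ρ ih => cases h with | keep _ h => rw [ih h]
  · rintro rfl
    induction ρ₁ with
    | nil => exact .nil
    | cons x ρ ih => exact .keep x ih

theorem repl_cons_iff {a₀ b₀ : Option ℕ} {a b ρ₁ ρ₂ : SPat} :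
    Repl (a₀ :: a) (b₀ :: b) ρ₁ ρ₂ ↔
      ∃ s t₁ t₂, ρ₁ = s ++ a₀ :: t₁ ∧ ρ₂ = s ++ b₀ :: t₂ ∧ Repl a b t₁ t₂ := by
  constructor
  · intro h
    generalize ha : a₀ :: a = a' at h
    generalize hb : b₀ :: b = b' at h
    induction h with
    | nil => simp at ha
    | keep x _ ih =>
      obtain ⟨s, t₁, t₂, rfl, rfl, h⟩ := ih ha hb
      exact ⟨x :: s, t₁, t₂, rfl, rfl, h⟩
    | repl x y h =>
      obtain ⟨rfl, rfl⟩ := cons_eq_cons.1 ha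
      obtain ⟨rfl, rfl⟩ := cons_eq_cons.1 hb
      exact ⟨[], _, _, rfl, rfl, h⟩
  · rintro ⟨s, t₁, t₂, rfl, rfl, h⟩
    induction s with
    | nil => exact .repl a₀ b₀ h
    | cons x s ih => exact .keep x ih

theorem repl_three_iff {a₁ a₂ a₃ b₁ b₂ b₃ : Option ℕ} {ρ₁ ρ₂ : SPat} :
    Repl [a₁, a₂, a₃] [b₁, b₂, b₃] ρ₁ ρ₂ ↔ ∃ s₁ s₂ s₃ t,
      ρ₁ = s₁ ++ a₁ :: (s₂ ++ a₂ :: (s₃ ++ a₃ :: t)) ∧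
        ρ₂ = s₁ ++ b₁ :: (s₂ ++ b₂ :: (s₃ ++ b₃ :: t)) := by
  simp only [repl_cons_iff, repl_nil_iff]
  constructor
  · rintro ⟨s₁, _, _, rfl, rfl, s₂, _, _, rfl, rfl, s₃, t, _, rfl, rfl, rfl⟩
    exact ⟨s₁, s₂, s₃, t, rfl, rfl⟩
  · rintro ⟨s₁, s₂, s₃, t, rfl, rfl⟩
    exact ⟨s₁, _, _, rfl, rfl, s₂, _, _, rfl, rfl, s₃, t, t, rfl, rfl, rfl⟩

theorem isCopy_pat123_iff {r : SPat} :
    IsCopy r pat123 ↔ ∃ x y z, r = [some x, some y, some z] ∧ x < y ∧ y < z := by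
  constructor
  · rintro ⟨hlen, hstar, -, hord⟩
    obtain ⟨r₀, r₁, r₂, rfl⟩ := length_eq_three.1 hlen
    obtain ⟨x, rfl⟩ := Option.ne_none_iff_exists'.1 (by simpa [pat123] using hstar 0)
    obtain ⟨y, rfl⟩ := Option.ne_none_iff_exists'.1 (by simpa [pat123] using hstar 1)
    obtain ⟨z, rfl⟩ := Option.ne_none_iff_exists'.1 (by simpa [pat123] using hstar 2)
    exact ⟨x, y, z, rfl, by simpa [pat123] using hord 0 1 (by simp) (by simp),
      by simpa [pat123] using hord 1 2 (by simp) (by simp)⟩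
  · rintro ⟨x, y, z, rfl, hxy, hyz⟩
    refine ⟨rfl, fun i => ?_, rfl, fun i j hi hj => ?_⟩
    · rcases i with _ | _ | _ | i <;> simp [pat123]
    · simp only [ints_cons_some, ints_nil, length_cons, length_nil] at hi hj
      interval_cases i <;> interval_cases j <;> simp [pat123] <;> omega

theorem isCopy_pat13S_iff {r : SPat} :
    IsCopy r pat13S ↔ ∃ x z, r = [some x, some z, none] ∧ x < z := by
  constructor
  · rintro ⟨hlen, hstar, -, hord⟩
    obtain ⟨r₀, r₁, r₂, rfl⟩ := length_eq_three.1 hlen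
    obtain ⟨x, rfl⟩ := Option.ne_none_iff_exists'.1 (by simpa [pat13S] using hstar 0)
    obtain ⟨z, rfl⟩ := Option.ne_none_iff_exists'.1 (by simpa [pat13S] using hstar 1)
    obtain rfl : r₂ = none := by simpa [pat13S] using hstar 2
    exact ⟨x, z, rfl, by simpa [pat13S] using hord 0 1 (by simp) (by simp)⟩
  · rintro ⟨x, z, rfl, hxz⟩
    refine ⟨rfl, fun i => ?_, rfl, fun i j hi hj => ?_⟩
    · rcases i with _ | _ | _ | i <;> simp [pat13S]
    · simp only [ints_cons_some, ints_cons_none, ints_nil, length_cons, length_nil] at hi hj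
      interval_cases i <;> interval_cases j <;> simp [pat13S] <;> omega

theorem isResult_pat123_pat13S_iff {π σ : List ℕ} :
    IsResult pat123 pat13S π σ ↔ IsPermList σ ∧
      ∃ u v, u.Nodup ∧ (∀ k ∈ u, 0 < k) ∧ OrdIso π u ∧ Slide u v ∧ OrdIso v σ := by
  constructor
  · rintro ⟨ρ₁, ρ₂, a, b, ⟨hnd, hpos⟩, hπ, ha, -, hb, -, hshare, hrepl, hσ, hσ'⟩
    obtain ⟨x, y, z, rfl, hxy, hyz⟩ := isCopy_pat123_iff.1 ha
    obtain ⟨x', z', rfl, -⟩ := isCopy_pat13S_iff.1 hb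
    obtain rfl : x = x' := by simpa using hshare 0 0 1 rfl rfl
    obtain rfl : z = z' := by simpa using hshare 2 1 3 rfl rfl
    obtain ⟨s₁, s₂, s₃, t, rfl, rfl⟩ := repl_three_iff.1 hrepl
    exact ⟨hσ, _, _, hnd, hpos, hπ,
      ⟨ints s₁, ints s₂, ints s₃, ints t, x, y, z, hxy, hyz, by simp, by simp⟩, hσ'⟩
  · rintro ⟨hσ, u, v, hnd, hpos, hπ, ⟨I₁, I₂, I₃, I₄, x, y, z, hxy, hyz, rfl, rfl⟩, hσ'⟩
    refine ⟨I₁.map some ++ some x :: (I₂.map some ++ some y :: (I₃.map some ++ some z :: I₄.map some)),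
      I₁.map some ++ some x :: (I₂.map some ++ some z :: (I₃.map some ++ none :: I₄.map some)),
      _, _, ⟨by simpa using hnd, by simpa using hpos⟩, by simpa using hπ,
      isCopy_pat123_iff.2 ⟨x, y, z, rfl, hxy, hyz⟩, ⟨?_, ?_⟩,
      isCopy_pat13S_iff.2 ⟨x, z, rfl, hxy.trans hyz⟩, ?_, ?_,
      repl_three_iff.2 ⟨_, _, _, _, rfl, rfl⟩, hσ, by simpa using hσ'⟩
    · simp only [ints_cons_some, ints_cons_none, ints_nil, nodup_cons, mem_singleton,
        not_mem_nil, not_false_eq_true, nodup_nil, and_true]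
      omega
    · simp only [ints_cons_some, ints_cons_none, ints_nil, mem_cons, not_mem_nil, or_false]
      rintro k (rfl | rfl) <;> exact hpos _ (by simp)
    · simp
    · rintro (_ | _ | _ | i) (_ | _ | _ | j) w hi hj <;> simp [pat123, pat13S] at hi hj ⊢ <;> omega

theorem isResult_pat13S_pat123_iff {π σ : List ℕ} :
    IsResult pat13S pat123 π σ ↔ IsPermList σ ∧
      ∃ u v, u.Nodup ∧ (∀ k ∈ u, 0 < k) ∧ OrdIso π v ∧ Slide u v ∧ OrdIso u σ := by
  constructor
  · rintro ⟨ρ₁, ρ₂, a, b, ⟨hnd, hpos⟩, hπ, ha, ⟨-, hbpos⟩, hb, hfresh, hshare, hrepl, hσ, hσ'⟩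
    obtain ⟨x, z, rfl, -⟩ := isCopy_pat13S_iff.1 ha
    obtain ⟨x', y, z', rfl, hxy, hyz⟩ := isCopy_pat123_iff.1 hb
    obtain rfl : x = x' := by simpa using hshare 0 0 1 rfl rfl
    obtain rfl : z = z' := by simpa using hshare 1 2 3 rfl rfl
    obtain ⟨s₁, s₂, s₃, t, rfl, rfl⟩ := repl_three_iff.1 hrepl
    have hy : y ∉ ints s₁ ++ x :: (ints s₂ ++ z :: (ints s₃ ++ ints t)) := fun hy => by
      have := hfresh y (by simp) (by simpa using hy)
      simp at this
      omega
    have hperm : ints (s₁ ++ some x :: (s₂ ++ some y :: (s₃ ++ some z :: t))) ~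
        y :: (ints s₁ ++ x :: (ints s₂ ++ z :: (ints s₃ ++ ints t))) := by
      simpa using perm_slide
    refine ⟨hσ, _, _, hperm.nodup_iff.2 (nodup_cons.2 ⟨hy, by simpa using hnd⟩), fun k hk => ?_,
      hπ, ⟨ints s₁, ints s₂, ints s₃, ints t, x, y, z, hxy, hyz, by simp, by simp⟩, hσ'⟩
    rcases mem_cons.1 (hperm.subset hk) with rfl | hk
    · exact hbpos _ (by simp)
    · exact hpos _ (by simpa using hk)
  · rintro ⟨hσ, u, v, hnd, hpos, hπ, ⟨I₁, I₂, I₃, I₄, x, y, z, hxy, hyz, rfl, rfl⟩, hσ'⟩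
    obtain ⟨hy, hvnd⟩ := nodup_cons.1 (perm_slide.nodup_iff.1 hnd)
    refine ⟨I₁.map some ++ some x :: (I₂.map some ++ some z :: (I₃.map some ++ none :: I₄.map some)),
      I₁.map some ++ some x :: (I₂.map some ++ some y :: (I₃.map some ++ some z :: I₄.map some)),
      _, _, ⟨by simpa using hvnd, fun k hk => hpos k ?_⟩, by simpa using hπ,
      isCopy_pat13S_iff.2 ⟨x, z, rfl, hxy.trans hyz⟩, ⟨?_, ?_⟩,
      isCopy_pat123_iff.2 ⟨x, y, z, rfl, hxy, hyz⟩, ?_, ?_,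
      repl_three_iff.2 ⟨_, _, _, _, rfl, rfl⟩, hσ, by simpa using hσ'⟩
    · simp only [ints_append, ints_map_some, ints_cons_some, ints_cons_none, mem_append,
        mem_cons] at hk ⊢
      tauto
    · simp only [ints_cons_some, ints_nil, nodup_cons, mem_cons, not_mem_nil,
        not_false_eq_true, nodup_nil, and_true, or_false]
      omega
    · simp only [ints_cons_some, ints_nil, mem_cons, not_mem_nil, or_false]
      rintro k (rfl | rfl | rfl) <;> exact hpos _ (by simp)
    · intro k hk hk'
      simp only [ints_cons_some, ints_cons_none, ints_nil, mem_cons, not_mem_nil, or_false] at hk ⊢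
      rcases hk with rfl | rfl | rfl
      · exact .inl rfl
      · exact absurd (by simpa using hk') hy
      · exact .inr rfl
    · rintro (_ | _ | _ | i) (_ | _ | _ | j) w hi hj <;> simp [pat123, pat13S] at hi hj ⊢ <;> omega

end Replacement

def Step (τ υ : List ℕ) : Prop := IsResult pat123 pat13S τ υ ∨ IsResult pat13S pat123 τ υ

theorem step_iff {τ υ : List ℕ} : Step τ υ ↔ IsPermList υ ∧ ∃ u v, u.Nodup ∧ (∀ k ∈ u, 0 < k) ∧
    Slide u v ∧ (OrdIso τ u ∧ OrdIso v υ ∨ OrdIso τ v ∧ OrdIso u υ) := by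
  rw [Step, isResult_pat123_pat13S_iff, isResult_pat13S_pat123_iff]
  constructor
  · rintro (⟨hυ, u, v, hnd, hpos, hτ, h, hυ'⟩ | ⟨hυ, u, v, hnd, hpos, hτ, h, hυ'⟩)
    exacts [⟨hυ, u, v, hnd, hpos, h, .inl ⟨hτ, hυ'⟩⟩, ⟨hυ, u, v, hnd, hpos, h, .inr ⟨hτ, hυ'⟩⟩]
  · rintro ⟨hυ, u, v, hnd, hpos, h, ⟨hτ, hυ'⟩ | ⟨hτ, hυ'⟩⟩
    exacts [.inl ⟨hυ, u, v, hnd, hpos, hτ, h, hυ'⟩, .inr ⟨hυ, u, v, hnd, hpos, hτ, h, hυ'⟩]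

theorem Step.isPermList_right {τ υ : List ℕ} (h : Step τ υ) : IsPermList υ :=
  (step_iff.1 h).1

theorem Step.symm {τ υ : List ℕ} (hτ : IsPermList τ) (h : Step τ υ) : Step υ τ := by
  obtain ⟨-, u, v, hnd, hpos, h, ⟨h₁, h₂⟩ | ⟨h₁, h₂⟩⟩ := step_iff.1 h
  exacts [step_iff.2 ⟨hτ, u, v, hnd, hpos, h, .inr ⟨h₂.symm, h₁.symm⟩⟩,
    step_iff.2 ⟨hτ, u, v, hnd, hpos, h, .inl ⟨h₂.symm, h₁.symm⟩⟩]

theorem Step.stats_eq {τ υ : List ℕ} (h : Step τ υ) : stats τ = stats υ := by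
  obtain ⟨-, u, v, -, -, h, ⟨h₁, h₂⟩ | ⟨h₁, h₂⟩⟩ := step_iff.1 h
  exacts [h₁.stats_eq.trans (h.stats_eq.trans h₂.stats_eq),
    h₁.stats_eq.trans (h.stats_eq.symm.trans h₂.stats_eq)]

theorem Step.hasNonMin_left {τ υ : List ℕ} (h : Step τ υ) : HasNonMin τ := by
  obtain ⟨-, u, v, -, -, h, ⟨h₁, -⟩ | ⟨h₁, -⟩⟩ := step_iff.1 h
  exacts [h₁.hasNonMin_iff.2 h.hasNonMin_left, h₁.hasNonMin_iff.2 h.hasNonMin_right]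

theorem isPermList_of_permEquiv {π σ : List ℕ} (hπ : IsPermList π)
    (h : PermEquiv pat123 pat13S π σ) : IsPermList σ := by
  induction h with
  | refl => exact hπ
  | tail _ h => exact Step.isPermList_right h

theorem stats_eq_of_permEquiv {π σ : List ℕ} (h : PermEquiv pat123 pat13S π σ) :
    stats π = stats σ := by
  induction h with
  | refl => rfl
  | tail _ h ih => exact ih.trans (Step.stats_eq h)

theorem permEquiv_symm {π σ : List ℕ} (hπ : IsPermList π) (h : PermEquiv pat123 pat13S π σ) :
    PermEquiv pat123 pat13S σ π := by
  induction h with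
  | refl => exact .refl
  | tail hπτ h ih => exact .head (Step.symm (isPermList_of_permEquiv hπ hπτ) h) ih

theorem getD_ridPerm {n i : ℕ} (hi : i < n) : (ridPerm n).getD i 0 = n - i := by
  rw [getD_eq_getElem _ _ (by simpa [ridPerm] using hi)]
  simp [ridPerm, getElem_reverse]
  omega

theorem not_hasNonMin_ridPerm (n : ℕ) : ¬HasNonMin (ridPerm n) := by
  rintro ⟨i, hi, hmin⟩
  have hi : i < n := by simpa [ridPerm] using hi
  refine hmin fun j hj => ?_
  rw [getD_ridPerm hi, getD_ridPerm (hj.trans hi)]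
  omega

theorem isolated_ridPerm (n : ℕ) : Isolated pat123 pat13S (ridPerm n) := by
  intro σ _ h
  rcases Relation.ReflTransGen.cases_head h with rfl | ⟨τ, hstep, -⟩
  · rfl
  · exact absurd (Step.hasNonMin_left hstep) (not_hasNonMin_ridPerm n)

section Standardization

def std (u : List ℕ) : List ℕ := u.map fun a => u.countP (· ≤ a)

theorem countP_le_lt_countP_le {u : List ℕ} {a b : ℕ} (hb : b ∈ u) (hab : a < b) :
    u.countP (· ≤ a) < u.countP (· ≤ b) := by
  induction u with
  | nil => simp at hb
  | cons e u ih =>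
    rcases mem_cons.1 hb with rfl | hb
    · have hmono : u.countP (· ≤ a) ≤ u.countP (· ≤ b) :=
        countP_mono_left fun x _ hx => by simp at hx ⊢; omega
      simp [hab.not_ge]
      omega
    · have := ih hb
      simp only [countP_cons, decide_eq_true_eq]
      split_ifs <;> omega

theorem ordIso_std (u : List ℕ) : OrdIso u (std u) := by
  refine ⟨(length_map _).symm, fun i j hi hj => ?_⟩
  have hi' : i < (std u).length := by simpa [std] using hi
  have hj' : j < (std u).length := by simpa [std] using hj
  rw [getD_eq_getElem _ _ hi, getD_eq_getElem _ _ hj, getD_eq_getElem _ _ hi',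
    getD_eq_getElem _ _ hj']
  simp only [std, getElem_map]
  refine ⟨countP_le_lt_countP_le (getElem_mem hj), fun h => ?_⟩
  by_contra! hle
  exact h.not_ge (countP_mono_left fun x _ hx => by simp at hx ⊢; omega)

theorem isPermList_std {u : List ℕ} (hnd : u.Nodup) : IsPermList (std u) := by
  have hstd : (std u).Nodup := hnd.map_on fun a ha b hb hab => by
    by_contra hne
    rcases Nat.lt_or_gt_of_ne hne with h | h
    · exact (countP_le_lt_countP_le hb h).ne hab
    · exact (countP_le_lt_countP_le ha h).ne' hab
  have hsub : std u ⊆ range' 1 u.length := by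
    intro k hk
    obtain ⟨a, ha, rfl⟩ := mem_map.1 hk
    have hpos : 0 < u.countP (· ≤ a) := countP_pos_iff.2 ⟨a, ha, by simp⟩
    have hle : u.countP (· ≤ a) ≤ u.length := countP_le_length
    simp only [mem_range'_1]
    omega
  rw [IsPermList, std, length_map]
  exact (subperm_of_subset hstd hsub).perm_of_length_le (by simp [std])

theorem step_std_of_slide {π u v : List ℕ} (hnd : u.Nodup) (hpos : ∀ k ∈ u, 0 < k)
    (hπ : OrdIso π u) (h : Slide u v) : Step π (std v) :=
  step_iff.2 ⟨isPermList_std (h.nodup hnd), u, v, hnd, hpos, h, .inl ⟨hπ, ordIso_std v⟩⟩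

theorem step_std_of_slide_symm {π u v : List ℕ} (hnd : u.Nodup) (hpos : ∀ k ∈ u, 0 < k)
    (hπ : OrdIso π v) (h : Slide u v) : Step π (std u) :=
  step_iff.2 ⟨isPermList_std hnd, u, v, hnd, hpos, h, .inr ⟨hπ, ordIso_std u⟩⟩

end Standardization

section Connectivity

theorem exists_eq_append_cons_append_cons {u : List ℕ} {i c d : ℕ} (hic : i < c) (hcd : c < d)
    (hd : d < u.length) : ∃ I₁ I₂ I₃ I₄, u = (I₁ ++ u[i] :: I₂) ++ u[c] :: (I₃ ++ u[d] :: I₄) ∧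
      (I₁ ++ u[i] :: I₂).length = c ∧ (I₁ ++ u[i] :: I₂).length + 1 + I₃.length = d := by
  refine ⟨u.take i, (u.take c).drop (i + 1), (u.take d).drop (c + 1), u.drop (d + 1), ?_, ?_, ?_⟩
  · refine ext_getElem (by simp; omega) fun k _ _ => ?_
    simp only [getElem_append, getElem_cons, getElem_take, getElem_drop, length_take,
      length_drop, length_append, length_cons]
    split_ifs <;> congr 1 <;> omega
  all_goals simp; omega

theorem set_eraseIdx_append_cons {P Q R : List ℕ} {y z : ℕ} :
    ((P ++ y :: (Q ++ z :: R)).set P.length z).eraseIdx (P.length + 1 + Q.length) =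
      P ++ z :: (Q ++ R) := by
  rw [set_append_right _ _ le_rfl, Nat.sub_self, set_cons_zero,
    eraseIdx_append_of_length_le (by omega),
    show P.length + 1 + Q.length - P.length = Q.length + 1 by omega, eraseIdx_cons_succ,
    eraseIdx_append_of_length_le le_rfl, Nat.sub_self, eraseIdx_cons_zero]

theorem slide_set_eraseIdx {u : List ℕ} {i c d : ℕ} (hic : i < c) (hcd : c < d)
    (hd : d < u.length) (hx : u[i] < u[c]) (hy : u[c] < u[d]) :
    Slide u ((u.set c u[d]).eraseIdx d) ∧ u ~ u[c] :: (u.set c u[d]).eraseIdx d := by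
  obtain ⟨I₁, I₂, I₃, I₄, hu, hc, hd'⟩ := exists_eq_append_cons_append_cons hic hcd hd
  generalize u[i] = x at hu hx hc hd' ⊢
  generalize u[c] = y at hu hx hy ⊢
  generalize u[d] = z at hu hy ⊢
  subst hu hc hd'
  rw [set_eraseIdx_append_cons]
  exact ⟨⟨I₁, I₂, I₃, I₄, x, y, z, hx, hy, by simp, by simp⟩, by simpa using perm_slide⟩

theorem slide_map_range {f : ℕ → ℕ} {n i c d : ℕ} (hic : i < c) (hcd : c < d) (hd : d < n)
    (hx : f i < f c) (hy : f c < f d) :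
    let v := (range (n - 1)).map fun k => if k = c then f d else f (if k < d then k else k + 1)
    Slide ((range n).map f) v ∧ (range n).map f ~ f c :: v := by
  have hd' : d < ((range n).map f).length := by simpa using hd
  obtain ⟨h, hp⟩ := slide_set_eraseIdx hic hcd hd' (by simpa using hx) (by simpa using hy)
  have hv : ((((range n).map f).set c ((range n).map f)[d]).eraseIdx d) =
      (range (n - 1)).map fun k => if k = c then f d else f (if k < d then k else k + 1) := by
    refine ext_getElem (by simp [length_eraseIdx, hd]) fun k _ _ => ?_
    simp only [getElem_eraseIdx, getElem_set, getElem_map, getElem_range]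
    split_ifs <;> first | rfl | omega
  simp only [getElem_map, getElem_range] at hv h hp ⊢
  rw [← hv]
  exact ⟨h, hp⟩

theorem map_getD_range (u : List ℕ) : (range u.length).map (u.getD · 0) = u :=
  ext_getElem (by simp) fun k _ hk => by simp [getElem?_eq_getElem hk]

theorem exists_shorter_of_lt {π : List ℕ} (hπ : IsPermList π) {i c d : ℕ} (hic : i < c)
    (hcd : c < d) (hd : d < π.length) (hx : π.getD i 0 < π.getD c 0)
    (hy : π.getD c 0 < π.getD d 0) :
    ∃ σ, σ.length < π.length ∧ HasNonMin σ ∧ PermEquiv pat123 pat13S π σ := by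
  obtain ⟨h, -⟩ := slide_map_range (f := (π.getD · 0)) hic hcd hd hx hy
  rw [map_getD_range] at h
  exact ⟨std _, by simp [std]; omega, (ordIso_std _).hasNonMin_iff.1 h.hasNonMin_right,
    .single (step_std_of_slide hπ.nodup hπ.pos (ordIso_refl π) h)⟩

/-- A doubled copy of `π` in which the entry at `c` is lowered by one (to a fresh value) and its
original value is re-inserted right after position `d`. -/
def detour (π : List ℕ) (c d k : ℕ) : ℕ :=
  if k = c then 2 * π.getD c 0 - 1 else
    if k = d + 1 then 2 * π.getD c 0 else 2 * π.getD (if k ≤ d then k else k - 1) 0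

theorem slide_detour {π : List ℕ} (hπ : IsPermList π) {i c d : ℕ} (hic : i < c) (hcd : c < d)
    (hd : d < π.length) (hx : π.getD i 0 < π.getD c 0) :
    let w := (range (π.length + 1)).map (detour π c d)
    Slide w (π.map (2 * ·)) ∧ w.Nodup ∧ ∀ k ∈ w, 0 < k := by
  have hc0 : 0 < π.getD c 0 := hπ.pos _ (getD_mem (by omega))
  obtain ⟨h, hp⟩ := slide_map_range (f := detour π c d) (n := π.length + 1) hic
    (by omega : c < d + 1) (by omega) (by simp only [detour]; split_ifs <;> omega)
    (by simp only [detour]; split_ifs <;> omega)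
  have hv : (range (π.length + 1 - 1)).map (fun k => if k = c then detour π c d (d + 1) else
      detour π c d (if k < d + 1 then k else k + 1)) = π.map (2 * ·) := by
    conv_rhs => rw [← map_getD_range π, map_map]
    refine map_congr_left fun k _ => ?_
    simp only [detour, Function.comp]
    split_ifs <;> first | omega | (subst_vars; rfl)
  rw [hv] at h hp
  rw [show detour π c d c = 2 * π.getD c 0 - 1 from if_pos rfl] at hp
  refine ⟨h, hp.nodup_iff.2 (nodup_cons.2 ⟨?_, hπ.nodup.map (mul_right_injective₀ two_ne_zero)⟩),
    fun k hk => ?_⟩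
  · rw [mem_map]
    rintro ⟨a, -, ha⟩
    omega
  · rcases mem_cons.1 (hp.subset hk) with rfl | hk
    · omega
    · obtain ⟨a, ha, rfl⟩ := mem_map.1 hk
      have := hπ.pos a ha
      omega

/-- When the two non-minima decrease, three slides (the first one backwards) delete the entry
at `d` from a doubled copy of `π`. -/
theorem exists_shorter_of_gt {π : List ℕ} (hπ : IsPermList π) {i c j d : ℕ} (hic : i < c)
    (hcd : c < d) (hjd : j < d) (hd : d < π.length) (hx : π.getD i 0 < π.getD c 0)
    (hj : π.getD j 0 < π.getD d 0) (hdc : π.getD d 0 < π.getD c 0) :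
    ∃ σ, σ.length < π.length ∧ HasNonMin σ ∧ PermEquiv pat123 pat13S π σ := by
  have hjc : j ≠ c := by rintro rfl; omega
  obtain ⟨h₁, hnd₁, hpos₁⟩ := slide_detour hπ hic hcd hd hx
  set w₁ := (range (π.length + 1)).map (detour π c d)
  obtain ⟨h₂, -⟩ := slide_map_range (f := detour π c d) (n := π.length + 1) hjd
    (by omega : d < d + 1) (by omega) (by simp only [detour]; split_ifs <;> omega)
    (by simp only [detour]; split_ifs <;> omega)
  set f₂ : ℕ → ℕ := fun k =>
    if k = d then detour π c d (d + 1) else detour π c d (if k < d + 1 then k else k + 1)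
  rw [Nat.add_sub_cancel] at h₂
  obtain ⟨h₃, -⟩ := slide_map_range (f := f₂) (n := π.length) hic hcd hd
    (by simp only [f₂, detour]; split_ifs <;> omega)
    (by simp only [f₂, detour]; split_ifs <;> omega)
  set w₂ := (range π.length).map f₂
  have hnd₂ : w₂.Nodup := h₂.nodup hnd₁
  have hpos₂ : ∀ k ∈ w₂, 0 < k := fun k hk => hpos₁ k (h₂.subset hk)
  refine ⟨std _, by simp [std]; omega, (ordIso_std _).hasNonMin_iff.1 h₃.hasNonMin_right,
    .head (step_std_of_slide_symm hnd₁ hpos₁ (ordIso_map (fun a b h => by omega) π) h₁)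
    (.head (step_std_of_slide hnd₁ hpos₁ (ordIso_std w₁).symm h₂)
    (.single (step_std_of_slide hnd₂ hpos₂ (ordIso_std w₂).symm h₃)))⟩

theorem eq_of_getD_eq_getD {u : List ℕ} (hnd : u.Nodup) {i j : ℕ} (hi : i < u.length)
    (hj : j < u.length) (h : u.getD i 0 = u.getD j 0) : i = j := by
  rw [getD_eq_getElem _ _ hi, getD_eq_getElem _ _ hj] at h
  exact hnd.getElem_inj_iff.1 h

theorem exists_lt_of_not_isLRMin {u : List ℕ} (hnd : u.Nodup) {c : ℕ} (hc : c < u.length)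
    (h : ¬IsLRMin u c) : ∃ i < c, u.getD i 0 < u.getD c 0 := by
  simp only [IsLRMin, not_forall, not_lt, exists_prop] at h
  obtain ⟨i, hi, hle⟩ := h
  exact ⟨i, hi, hle.lt_of_ne fun e => hi.ne (eq_of_getD_eq_getD hnd (hi.trans hc) hc e)⟩

theorem exists_shorter {π : List ℕ} (hπ : IsPermList π) {c d : ℕ} (hcd : c < d)
    (hd : d < π.length) (hcm : ¬IsLRMin π c) (hdm : ¬IsLRMin π d) :
    ∃ σ, σ.length < π.length ∧ HasNonMin σ ∧ PermEquiv pat123 pat13S π σ := by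
  obtain ⟨i, hic, hi⟩ := exists_lt_of_not_isLRMin hπ.nodup (hcd.trans hd) hcm
  obtain ⟨j, hjd, hj⟩ := exists_lt_of_not_isLRMin hπ.nodup hd hdm
  rcases lt_or_gt_of_ne fun e => hcd.ne (eq_of_getD_eq_getD hπ.nodup (hcd.trans hd) hd e)
    with hcd' | hdc
  · exact exists_shorter_of_lt hπ hic hcd hd hi hcd'
  · exact exists_shorter_of_gt hπ hic hcd hjd hd hi hj hdc

end Connectivity

section UniqueNonMin

def IsUniqueNonMin (τ : List ℕ) (p : ℕ) : Prop :=
  p < τ.length ∧ ¬IsLRMin τ p ∧ ∀ j < τ.length, j ≠ p → IsLRMin τ j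

theorem exists_permEquiv_isUniqueNonMin {π : List ℕ} (hπ : IsPermList π) (hn : HasNonMin π) :
    ∃ τ p, IsPermList τ ∧ IsUniqueNonMin τ p ∧ PermEquiv pat123 pat13S π τ := by
  induction hlen : π.length using Nat.strong_induction_on generalizing π with
  | _ n ih =>
    by_cases htwo : ∃ c d, c < d ∧ d < π.length ∧ ¬IsLRMin π c ∧ ¬IsLRMin π d
    · obtain ⟨c, d, hcd, hd, hcm, hdm⟩ := htwo
      obtain ⟨σ, hσlen, hσ, hπσ⟩ := exists_shorter hπ hcd hd hcm hdm
      obtain ⟨τ, p, hτ, hτp, hστ⟩ :=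
        ih _ (hlen ▸ hσlen) (isPermList_of_permEquiv hπ hπσ) hσ rfl
      exact ⟨τ, p, hτ, hτp, hπσ.trans hστ⟩
    · obtain ⟨p, hp, hpm⟩ := hn
      refine ⟨π, p, hπ, ⟨hp, hpm, fun j hj hjp => ?_⟩, .refl⟩
      by_contra hjm
      rcases Nat.lt_or_gt_of_ne hjp with h | h
      exacts [htwo ⟨j, p, h, hp, hjm, hpm⟩, htwo ⟨p, j, h, hj, hpm, hjm⟩]

theorem length_filter_range'_lt {n q : ℕ} (hq : q ≤ n + 1) :
    ((range' 1 n).filter (· < q)).length = q - 1 := by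
  obtain ⟨m, rfl⟩ : ∃ m, n = (q - 1) + m := ⟨n - (q - 1), by omega⟩
  rw [← range'_append, filter_append, length_append,
    filter_eq_self.2 fun a ha => by simp [mem_range'] at ha; simp; omega,
    filter_eq_nil_iff.2 fun a ha => by simp [mem_range'] at ha; simp; omega]
  simp

namespace IsUniqueNonMin

variable {τ : List ℕ} {p : ℕ}

theorem isLRMin_iff (h : IsUniqueNonMin τ p) {j : ℕ} (hj : j < τ.length) :
    IsLRMin τ j ↔ j ≠ p :=
  ⟨fun hm e => h.2.1 (e ▸ hm), h.2.2 j hj⟩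

theorem numLRMin_eq (h : IsUniqueNonMin τ p) : numLRMin τ = τ.length - 1 := by
  have e : (range τ.length).filter (fun j => decide (IsLRMin τ j)) = (range τ.length).erase p := by
    rw [nodup_range.erase_eq_filter]
    exact filter_congr fun j hj => Bool.eq_iff_iff.2 (by simp [h.isLRMin_iff (mem_range.1 hj)])
  rw [numLRMin, e, length_erase_of_mem (mem_range.2 h.1), length_range]

theorem leftNonMin_eq (h : IsUniqueNonMin τ p) : leftNonMin τ = some p := by
  rw [leftNonMin, find?_range_eq_some]
  refine ⟨by simpa using h.2.1, mem_range.2 h.1, fun j hj => ?_⟩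
  simpa using h.2.2 j (hj.trans h.1) hj.ne

theorem vStatMax_eq (h : IsUniqueNonMin τ p) (hτ : IsPermList τ) :
    vStatMax τ = τ.getD p 0 - 1 := by
  have e : (range τ.length).filter (fun i => decide (IsLRMin τ i ∧
      ∃ j < τ.length, ¬IsLRMin τ j ∧ τ.getD i 0 < τ.getD j 0)) =
      (range τ.length).filter (fun i => τ.getD i 0 < τ.getD p 0) := by
    refine filter_congr fun i hi => decide_eq_decide.2 ?_
    have hi := mem_range.1 hi
    simp only [h.isLRMin_iff hi]
    constructor
    · rintro ⟨-, j, hj, hjm, hlt⟩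
      rwa [← not_not.1 (mt (h.isLRMin_iff hj).2 hjm)]
    · intro hlt
      exact ⟨fun e => (e ▸ hlt).false, p, h.1, h.2.1, hlt⟩
  have hq := hτ.subset (getD_mem h.1)
  rw [mem_range'_1] at hq
  rw [vStatMax_eq_filter, e]
  generalize τ.getD p 0 = q at hq ⊢
  have e' : ((range τ.length).filter fun i => τ.getD i 0 < q).length =
      (τ.filter (· < q)).length := by
    conv_rhs => rw [← map_getD_range τ]
    rw [filter_map, length_map]
    rfl
  rw [e', (hτ.filter _).length_eq, length_filter_range'_lt (by omega)]

theorem pairwise_eraseIdx (h : IsUniqueNonMin τ p) : (τ.eraseIdx p).Pairwise (· > ·) := by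
  have hdec : ∀ a b (hab : a < b) (hb : b < τ.length), b ≠ p → τ[b] < τ[a] := fun a b hab hb hbp => by
    have := h.2.2 b hb hbp a hab
    rwa [getD_eq_getElem _ _ hb, getD_eq_getElem _ _ (hab.trans hb)] at this
  rw [pairwise_iff_getElem]
  intro a b ha hb hab
  simp only [length_eraseIdx_of_lt h.1] at ha hb
  simp only [getElem_eraseIdx]
  split_ifs <;> exact hdec _ _ (by omega) _ (by omega)

theorem eq_of_stats_eq {τ' : List ℕ} {p' : ℕ} (hτ : IsPermList τ) (hτ' : IsPermList τ')
    (h : IsUniqueNonMin τ p) (h₂ : IsUniqueNonMin τ' p') (hs : stats τ = stats τ') : τ = τ' := by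
  simp only [stats, h.numLRMin_eq, h.leftNonMin_eq, h.vStatMax_eq hτ, h₂.numLRMin_eq,
    h₂.leftNonMin_eq, h₂.vStatMax_eq hτ', Prod.mk.injEq, Option.some.injEq] at hs
  obtain ⟨hn, rfl, hq⟩ := hs
  have hlen : τ.length = τ'.length := by have := h.1; have := h₂.1; omega
  have hq : τ[p]'h.1 = τ'[p]'h₂.1 := by
    have := hτ.pos _ (getD_mem h.1)
    have := hτ'.pos _ (getD_mem h₂.1)
    rw [← getD_eq_getElem _ 0, ← getD_eq_getElem _ 0]
    omega
  have hperm : τ ~ τ' := hτ.trans (hlen ▸ hτ'.symm)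
  have herase : τ.eraseIdx p = τ'.eraseIdx p := by
    refine Perm.eq_of_pairwise (le := (· > ·)) (fun a b _ _ hab hba => by omega)
      h.pairwise_eraseIdx h₂.pairwise_eraseIdx ?_
    rw [← hτ.nodup.erase_getElem p h.1, ← hτ'.nodup.erase_getElem p h₂.1, hq]
    exact hperm.erase _
  rw [← insertIdx_eraseIdx_getElem h.1, ← insertIdx_eraseIdx_getElem h₂.1, herase, hq]

end IsUniqueNonMin

theorem permEquiv_iff_stats_eq {π σ : List ℕ} (hπ : IsPermList π) (hσ : IsPermList σ)
    (hπn : HasNonMin π) (hσn : HasNonMin σ) :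
    PermEquiv pat123 pat13S π σ ↔ stats π = stats σ := by
  refine ⟨stats_eq_of_permEquiv, fun hs => ?_⟩
  obtain ⟨τ, p, hτ, hτp, hπτ⟩ := exists_permEquiv_isUniqueNonMin hπ hπn
  obtain ⟨τ', p', hτ', hτp', hστ'⟩ := exists_permEquiv_isUniqueNonMin hσ hσn
  obtain rfl : τ = τ' := hτp.eq_of_stats_eq hτ hτ' hτp'
    ((stats_eq_of_permEquiv hπτ).symm.trans (hs.trans (stats_eq_of_permEquiv hστ')))
  exact hπτ.trans (permEquiv_symm hσ hστ')

end UniqueNonMin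

end StarReplacement

/-- under `123 ↔ 13★`: (a) every reverse identity permutation is
isolated; (b) two permutations each having a non-left-to-right-minimum element
are equivalent iff they agree in: the number of left-to-right minima, the
position of the leftmost non-left-to-right-minimum element, and the number of
left-to-right minima smaller than the largest non-left-to-right-minimum
element. -/
theorem classes_13star :
    (∀ n : ℕ, Isolated pat123 pat13S (ridPerm n)) ∧
    (∀ π σ : List ℕ, IsPermList π → IsPermList σ → HasNonMin π → HasNonMin σ →
      (PermEquiv pat123 pat13S π σ ↔
        numLRMin π = numLRMin σ ∧ leftNonMin π = leftNonMin σ ∧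
          vStatMax π = vStatMax σ)) := by
  refine ⟨StarReplacement.isolated_ridPerm, fun π σ hπ hσ hπn hσn => ?_⟩
  rw [StarReplacement.permEquiv_iff_stats_eq hπ hσ hπn hσn]
  simp [StarReplacement.stats]
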